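/- arXiv:1206.6717 — 2 statements merged into one kernel-verified Lean document; each statement's English description precedes it below -/
import Mathlib

section
/- Let E = E_s ⊕ E_u be an ultrametric Banach space over a valued field, and A : E → E a hyperbolic automorphism (there is an adapted norm, not necessarily ultrametric, satisfying ‖A|_{E_s}‖ < 1 and ‖A⁻¹|_{E_u}‖ < 1 and ‖x+y‖ = max{‖x‖,‖y‖} for x ∈ E_s, y ∈ E_u). Then there exists an ultrametric norm on E adapted to A, i.e., an ultrametric norm ‖·‖~ defining the topology with ‖x + y‖~ = max{‖x‖~, ‖y‖~} for x ∈ E_s, y ∈ E_u, and ‖A|_{E_s}‖~ < 1, ‖(A⁻¹)|_{E_u}‖~ < 1 (operator norms with respect to ‖·‖~). -/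
/-!
On `E_s`, the adapted norm `N` gives `‖Aⁿ x‖ ≤ C μⁿ ‖x‖` with `μ < 1`, so
`x ↦ supₙ ‖Aⁿ x‖ / μⁿ` is a norm equivalent to `‖·‖` under which `A` contracts by `μ`;
being a supremum of ultrametric seminorms, it is ultrametric. The same construction with `A⁻¹`
works on `E_u`, and the new norm is the maximum of these two norms of the components.
It is equivalent to `‖·‖` because `N` is the max-norm of the components, which bounds the
projections onto `E_s` and `E_u`.
-/

theorem exists_pos_contraction {α : Type*} {N : α → ℝ} {f : α → α} {p : α → Prop}
    (hN : ∀ x, 0 ≤ N x) (h : ∃ θ : ℝ, θ < 1 ∧ ∀ x, p x → N (f x) ≤ θ * N x) :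
    ∃ μ : ℝ, 0 < μ ∧ μ < 1 ∧ ∀ x, p x → N (f x) ≤ μ * N x := by
  obtain ⟨θ, hθ, hf⟩ := h
  refine ⟨max θ (1 / 2), by positivity, max_lt hθ (by norm_num), fun x hx => ?_⟩
  exact (hf x hx).trans (mul_le_mul_of_nonneg_right (le_max_left _ _) (hN x))

section AdaptedNorm

variable {K F : Type*} [NontriviallyNormedField K] [NormedAddCommGroup F] [NormedSpace K F]

theorem norm_pow_apply_le_of_contracting (f : Module.End K F) {N : F → ℝ} {c₁ c₂ μ : ℝ}
    (hc₁ : 0 < c₁) (hμ : 0 ≤ μ) (hN : ∀ x, c₁ * ‖x‖ ≤ N x ∧ N x ≤ c₂ * ‖x‖)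
    (hf : ∀ x, N (f x) ≤ μ * N x) (n : ℕ) (x : F) :
    ‖(f ^ n) x‖ ≤ c₂ / c₁ * μ ^ n * ‖x‖ := by
  have hiter : N ((f ^ n) x) ≤ μ ^ n * N x := by
    induction n with
    | zero => simp
    | succ n ih =>
      rw [pow_succ', Module.End.mul_apply, pow_succ', mul_assoc]
      exact (hf _).trans (mul_le_mul_of_nonneg_left ih hμ)
  rw [div_mul_eq_mul_div, div_mul_eq_mul_div, le_div_iff₀ hc₁]
  calc ‖(f ^ n) x‖ * c₁ ≤ N ((f ^ n) x) := by linarith [(hN ((f ^ n) x)).1]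
    _ ≤ μ ^ n * (c₂ * ‖x‖) := hiter.trans (mul_le_mul_of_nonneg_left (hN x).2 (by positivity))
    _ = c₂ * μ ^ n * ‖x‖ := by ring

noncomputable def adaptedNorm (f : Module.End K F) (μ : ℝ) (x : F) : ℝ :=
  ⨆ n : ℕ, ‖(f ^ n) x‖ / μ ^ n

variable {f : Module.End K F} {μ C : ℝ} (hμ : 0 < μ)
  (hf : ∀ n x, ‖(f ^ n) x‖ ≤ C * μ ^ n * ‖x‖)
include hμ hf

theorem div_pow_le_of_norm_pow_apply_le (n : ℕ) (x : F) : ‖(f ^ n) x‖ / μ ^ n ≤ C * ‖x‖ := by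
  rw [div_le_iff₀ (pow_pos hμ n)]
  linarith [hf n x]

theorem bddAbove_adaptedNorm (x : F) : BddAbove (Set.range fun n : ℕ => ‖(f ^ n) x‖ / μ ^ n) :=
  ⟨C * ‖x‖, Set.forall_mem_range.2 (div_pow_le_of_norm_pow_apply_le hμ hf · x)⟩

theorem norm_le_adaptedNorm (x : F) : ‖x‖ ≤ adaptedNorm f μ x := by
  simpa [adaptedNorm] using le_ciSup (bddAbove_adaptedNorm hμ hf x) 0

theorem adaptedNorm_nonneg (x : F) : 0 ≤ adaptedNorm f μ x :=
  (norm_nonneg x).trans (norm_le_adaptedNorm hμ hf x)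

theorem adaptedNorm_le (x : F) : adaptedNorm f μ x ≤ C * ‖x‖ :=
  ciSup_le (div_pow_le_of_norm_pow_apply_le hμ hf · x)

theorem adaptedNorm_add_le [IsUltrametricDist F] (x y : F) :
    adaptedNorm f μ (x + y) ≤ max (adaptedNorm f μ x) (adaptedNorm f μ y) := by
  refine ciSup_le fun n => ?_
  calc ‖(f ^ n) (x + y)‖ / μ ^ n ≤ max ‖(f ^ n) x‖ ‖(f ^ n) y‖ / μ ^ n := by
        rw [map_add]
        gcongr
        exact IsUltrametricDist.norm_add_le_max _ _
    _ = max (‖(f ^ n) x‖ / μ ^ n) (‖(f ^ n) y‖ / μ ^ n) :=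
        (max_div_div_right (by positivity) _ _).symm
    _ ≤ _ := max_le_max (le_ciSup (bddAbove_adaptedNorm hμ hf x) n)
        (le_ciSup (bddAbove_adaptedNorm hμ hf y) n)

omit hμ hf in
theorem adaptedNorm_smul (c : K) (x : F) : adaptedNorm f μ (c • x) = ‖c‖ * adaptedNorm f μ x := by
  simp only [adaptedNorm, map_smul, norm_smul, mul_div_assoc,
    Real.mul_iSup_of_nonneg (norm_nonneg c)]

omit hμ hf in
theorem adaptedNorm_zero : adaptedNorm f μ 0 = 0 := by
  simp [adaptedNorm]

theorem adaptedNorm_apply_le (x : F) : adaptedNorm f μ (f x) ≤ μ * adaptedNorm f μ x := by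
  refine ciSup_le fun n => ?_
  calc ‖(f ^ n) (f x)‖ / μ ^ n = μ * (‖(f ^ (n + 1)) x‖ / μ ^ (n + 1)) := by
        rw [pow_succ f, Module.End.mul_apply]
        field_simp
        ring
    _ ≤ μ * adaptedNorm f μ x :=
        mul_le_mul_of_nonneg_left (le_ciSup (bddAbove_adaptedNorm hμ hf x) (n + 1)) hμ.le

end AdaptedNorm

theorem max_norm_le_of_map_add_eq_max {E : Type*} [SeminormedAddCommGroup E] {N : E → ℝ}
    {c₁ c₂ : ℝ} (hc₁ : 0 < c₁) (hN : ∀ x, c₁ * ‖x‖ ≤ N x ∧ N x ≤ c₂ * ‖x‖) {x y : E}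
    (hxy : N (x + y) = max (N x) (N y)) : max ‖x‖ ‖y‖ ≤ c₂ / c₁ * ‖x + y‖ := by
  rw [div_mul_eq_mul_div, le_div_iff₀ hc₁, max_mul_of_nonneg _ _ hc₁.le]
  have hmax : max (N x) (N y) ≤ c₂ * ‖x + y‖ := hxy ▸ (hN (x + y)).2
  exact max_le (by linarith [(hN x).1, le_max_left (N x) (N y)])
    (by linarith [(hN y).1, le_max_right (N x) (N y)])

section MaxOfIsCompl

variable {K E : Type*} [NontriviallyNormedField K] [NormedAddCommGroup E] [NormedSpace K E]
  {p q : Submodule K E} (hpq : IsCompl p q) (gp : p → ℝ) (gq : q → ℝ)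

noncomputable def maxOfIsCompl (x : E) : ℝ :=
  max (gp ((p.prodEquivOfIsCompl q hpq).symm x).1) (gq ((p.prodEquivOfIsCompl q hpq).symm x).2)

theorem maxOfIsCompl_add (x : p) (y : q) :
    maxOfIsCompl hpq gp gq (x + y) = max (gp x) (gq y) := by
  have : (p.prodEquivOfIsCompl q hpq).symm (x + y) = (x, y) :=
    (p.prodEquivOfIsCompl q hpq).symm_apply_eq.2 rfl
  simp only [maxOfIsCompl, this]

theorem maxOfIsCompl_of_mem_left (x : p) (hgq : gq 0 = 0) (hgp : 0 ≤ gp x) :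
    maxOfIsCompl hpq gp gq x = gp x := by
  simpa [hgq, hgp] using maxOfIsCompl_add hpq gp gq x 0

theorem maxOfIsCompl_of_mem_right (y : q) (hgp : gp 0 = 0) (hgq : 0 ≤ gq y) :
    maxOfIsCompl hpq gp gq y = gq y := by
  simpa [hgq, hgp] using maxOfIsCompl_add hpq gp gq 0 y

theorem maxOfIsCompl_add_le (hgp : ∀ x y, gp (x + y) ≤ max (gp x) (gp y))
    (hgq : ∀ x y, gq (x + y) ≤ max (gq x) (gq y)) (x y : E) :
    maxOfIsCompl hpq gp gq (x + y) ≤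
      max (maxOfIsCompl hpq gp gq x) (maxOfIsCompl hpq gp gq y) := by
  simp only [maxOfIsCompl, map_add, Prod.fst_add, Prod.snd_add]
  exact max_le ((hgp _ _).trans (max_le_max (le_max_left _ _) (le_max_left _ _)))
    ((hgq _ _).trans (max_le_max (le_max_right _ _) (le_max_right _ _)))

theorem maxOfIsCompl_smul (hgp : ∀ (c : K) x, gp (c • x) = ‖c‖ * gp x)
    (hgq : ∀ (c : K) x, gq (c • x) = ‖c‖ * gq x) (c : K) (x : E) :
    maxOfIsCompl hpq gp gq (c • x) = ‖c‖ * maxOfIsCompl hpq gp gq x := by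
  simp only [maxOfIsCompl, map_smul, Prod.smul_fst, Prod.smul_snd, hgp, hgq,
    mul_max_of_nonneg _ _ (norm_nonneg c)]

theorem norm_le_maxOfIsCompl [IsUltrametricDist E] (hgp : ∀ x, ‖x‖ ≤ gp x)
    (hgq : ∀ y, ‖y‖ ≤ gq y) (x : E) : ‖x‖ ≤ maxOfIsCompl hpq gp gq x := by
  obtain ⟨⟨y, z⟩, rfl⟩ := (p.prodEquivOfIsCompl q hpq).surjective x
  rw [Submodule.coe_prodEquivOfIsCompl', maxOfIsCompl_add]
  exact (IsUltrametricDist.norm_add_le_max _ _).trans (max_le_max (hgp y) (hgq z))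

theorem maxOfIsCompl_le {C D : ℝ} (hC : 0 ≤ C) (hgp : ∀ x, gp x ≤ C * ‖x‖)
    (hgq : ∀ y, gq y ≤ C * ‖y‖) (hpq_bdd : ∀ (y : p) (z : q), max ‖y‖ ‖z‖ ≤ D * ‖(y + z : E)‖)
    (x : E) : maxOfIsCompl hpq gp gq x ≤ C * D * ‖x‖ := by
  obtain ⟨⟨y, z⟩, rfl⟩ := (p.prodEquivOfIsCompl q hpq).surjective x
  rw [Submodule.coe_prodEquivOfIsCompl', maxOfIsCompl_add, mul_assoc]
  calc max (gp y) (gq z) ≤ C * max ‖y‖ ‖z‖ := by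
        rw [mul_max_of_nonneg _ _ hC]
        exact max_le_max (hgp y) (hgq z)
    _ ≤ C * (D * ‖(y + z : E)‖) := mul_le_mul_of_nonneg_left (hpq_bdd y z) hC

end MaxOfIsCompl

theorem exists_ultrametric_adapted_norm_general
    {K E : Type*} [NontriviallyNormedField K]
    [NormedAddCommGroup E] [NormedSpace K E]
    [IsUltrametricDist E]
    (Es Eu : Submodule K E) (hcompl : IsCompl Es Eu)
    (A : E ≃L[K] E)
    (hAs : ∀ x ∈ Es, A x ∈ Es)
    (hAu' : ∀ x ∈ Eu, A.symm x ∈ Eu)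
    (N : E → ℝ)
    (hN0 : ∀ x, 0 ≤ N x)
    (hNequiv : ∃ c₁ c₂ : ℝ, 0 < c₁ ∧ 0 < c₂ ∧ ∀ x, c₁ * ‖x‖ ≤ N x ∧ N x ≤ c₂ * ‖x‖)
    (hNmax : ∀ x ∈ Es, ∀ y ∈ Eu, N (x + y) = max (N x) (N y))
    (hNs : ∃ θ : ℝ, θ < 1 ∧ ∀ x ∈ Es, N (A x) ≤ θ * N x)
    (hNu : ∃ θ : ℝ, θ < 1 ∧ ∀ x ∈ Eu, N (A.symm x) ≤ θ * N x) :
    ∃ Ntil : E → ℝ,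
      (∀ x, 0 ≤ Ntil x) ∧
      (∀ x y, Ntil (x + y) ≤ max (Ntil x) (Ntil y)) ∧
      (∀ (c : K) (x : E), Ntil (c • x) = ‖c‖ * Ntil x) ∧
      (∃ c₁ c₂ : ℝ, 0 < c₁ ∧ 0 < c₂ ∧ ∀ x, c₁ * ‖x‖ ≤ Ntil x ∧ Ntil x ≤ c₂ * ‖x‖) ∧
      (∀ x ∈ Es, ∀ y ∈ Eu, Ntil (x + y) = max (Ntil x) (Ntil y)) ∧
      (∃ θ : ℝ, θ < 1 ∧ ∀ x ∈ Es, Ntil (A x) ≤ θ * Ntil x) ∧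
      (∃ θ : ℝ, θ < 1 ∧ ∀ x ∈ Eu, Ntil (A.symm x) ≤ θ * Ntil x) := by
  obtain ⟨c₁, c₂, hc₁, hc₂, hN⟩ := hNequiv
  obtain ⟨μs, hμs, hμs1, hAs_contr⟩ := exists_pos_contraction hN0 hNs
  obtain ⟨μu, hμu, hμu1, hAu_contr⟩ := exists_pos_contraction hN0 hNu
  set fs := (A : E →ₗ[K] E).restrict hAs
  set fu := (A.symm : E →ₗ[K] E).restrict hAu'
  have hfs := norm_pow_apply_le_of_contracting fs (N := fun x => N x) hc₁ hμs.le
    (fun x => hN x) (fun x => hAs_contr x x.2)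
  have hfu := norm_pow_apply_le_of_contracting fu (N := fun x => N x) hc₁ hμu.le
    (fun x => hN x) (fun x => hAu_contr x x.2)
  set gs := adaptedNorm fs μs
  set gu := adaptedNorm fu μu
  have hs (x : Es) : maxOfIsCompl hcompl gs gu x = gs x :=
    maxOfIsCompl_of_mem_left hcompl gs gu x adaptedNorm_zero (adaptedNorm_nonneg hμs hfs x)
  have hu (y : Eu) : maxOfIsCompl hcompl gs gu y = gu y :=
    maxOfIsCompl_of_mem_right hcompl gs gu y adaptedNorm_zero (adaptedNorm_nonneg hμu hfu y)
  refine ⟨maxOfIsCompl hcompl gs gu, fun x => le_max_of_le_left (adaptedNorm_nonneg hμs hfs _),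
    maxOfIsCompl_add_le hcompl gs gu (adaptedNorm_add_le hμs hfs) (adaptedNorm_add_le hμu hfu),
    maxOfIsCompl_smul hcompl gs gu adaptedNorm_smul adaptedNorm_smul,
    ⟨1, c₂ / c₁ * (c₂ / c₁), one_pos, by positivity, fun x => ⟨?_, ?_⟩⟩,
    fun x hx y hy => ?_, ⟨μs, hμs1, fun x hx => ?_⟩, ⟨μu, hμu1, fun y hy => ?_⟩⟩
  · rw [one_mul]
    exact norm_le_maxOfIsCompl hcompl gs gu (norm_le_adaptedNorm hμs hfs)
      (norm_le_adaptedNorm hμu hfu) x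
  · exact maxOfIsCompl_le hcompl gs gu (by positivity) (adaptedNorm_le hμs hfs)
      (adaptedNorm_le hμu hfu)
      (fun y z => max_norm_le_of_map_add_eq_max hc₁ hN (hNmax y y.2 z z.2)) x
  · rw [maxOfIsCompl_add hcompl gs gu ⟨x, hx⟩ ⟨y, hy⟩, hs ⟨x, hx⟩, hu ⟨y, hy⟩]
  · rw [hs ⟨x, hx⟩, hs ⟨A x, hAs x hx⟩]
    exact adaptedNorm_apply_le hμs hfs ⟨x, hx⟩
  · rw [hu ⟨y, hy⟩, hu ⟨A.symm y, hAu' y hy⟩]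
    exact adaptedNorm_apply_le hμu hfu ⟨y, hy⟩

/-- Existence of an ultrametric adapted norm: if a hyperbolic automorphism of an
ultrametric Banach space has some (not necessarily ultrametric) adapted norm
`N`, then there is an ultrametric adapted norm `Ntil` equivalent to `‖·‖`. -/
theorem exists_ultrametric_adapted_norm
    {K E : Type*} [NontriviallyNormedField K]
    [NormedAddCommGroup E] [NormedSpace K E] [CompleteSpace E]
    [IsUltrametricDist E]
    (Es Eu : Submodule K E) (hcompl : IsCompl Es Eu)
    (A : E ≃L[K] E)
    (hAs : ∀ x ∈ Es, A x ∈ Es) (hAu : ∀ x ∈ Eu, A x ∈ Eu)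
    (hAs' : ∀ x ∈ Es, A.symm x ∈ Es) (hAu' : ∀ x ∈ Eu, A.symm x ∈ Eu)
    (N : E → ℝ)
    (hN0 : ∀ x, 0 ≤ N x)
    (hNtri : ∀ x y, N (x + y) ≤ N x + N y)
    (hNhom : ∀ (c : K) (x : E), N (c • x) = ‖c‖ * N x)
    (hNequiv : ∃ c₁ c₂ : ℝ, 0 < c₁ ∧ 0 < c₂ ∧ ∀ x, c₁ * ‖x‖ ≤ N x ∧ N x ≤ c₂ * ‖x‖)
    (hNmax : ∀ x ∈ Es, ∀ y ∈ Eu, N (x + y) = max (N x) (N y))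
    (hNs : ∃ θ : ℝ, θ < 1 ∧ ∀ x ∈ Es, N (A x) ≤ θ * N x)
    (hNu : ∃ θ : ℝ, θ < 1 ∧ ∀ x ∈ Eu, N (A.symm x) ≤ θ * N x) :
    ∃ Ntil : E → ℝ,
      (∀ x, 0 ≤ Ntil x) ∧
      (∀ x y, Ntil (x + y) ≤ max (Ntil x) (Ntil y)) ∧
      (∀ (c : K) (x : E), Ntil (c • x) = ‖c‖ * Ntil x) ∧
      (∃ c₁ c₂ : ℝ, 0 < c₁ ∧ 0 < c₂ ∧ ∀ x, c₁ * ‖x‖ ≤ Ntil x ∧ Ntil x ≤ c₂ * ‖x‖) ∧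
      (∀ x ∈ Es, ∀ y ∈ Eu, Ntil (x + y) = max (Ntil x) (Ntil y)) ∧
      (∃ θ : ℝ, θ < 1 ∧ ∀ x ∈ Es, Ntil (A x) ≤ θ * Ntil x) ∧
      (∃ θ : ℝ, θ < 1 ∧ ∀ x ∈ Eu, Ntil (A.symm x) ≤ θ * Ntil x) :=
  exists_ultrametric_adapted_norm_general Es Eu hcompl A hAs hAu' N hN0 hNequiv hNmax hNs hNu
end

section
/- Let E = E_s ⊕ E_u be a Banach space over a valued field with adapted-type norm, A a linear homeomorphism preserving the splitting with Λ := max{‖A₂⁻¹‖(1+Lip(g_u)), ‖A₁‖ + Lip(g_s)} < 1 and Lip(h) < ‖A⁻¹‖⁻¹, and suppose additionally Lip(g) < ‖A⁻¹‖⁻¹, ‖A₂⁻¹‖(1 + Lip(h_u)) < 1 and ‖A₁‖ + Lip(h_s) < 1, where g, h : E → E are bounded Lipschitz. Let v be the unique bounded continuous map with (id + v) ∘ (A + h) = (A + g) ∘ (id + v). Then id + v : E → E is a homeomorphism, and w := (id + v)⁻¹ − id is the unique bounded continuous map satisfying (id + w) ∘ (A + g) = (A + h) ∘ (id + w). -/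
/-!
`A + h` is a Lipschitz-small perturbation of the linear homeomorphism `A`, hence a homeomorphism.
Writing the conjugacy equation `(id + v) ∘ (A + h) = (A + g) ∘ (id + v)` as
`v ∘ (A + h) = A ∘ v + g ∘ (id + v) - h`, one solves the stable component forwards along
`(A + h)⁻¹` and the unstable one backwards through `A₂⁻¹`; on bounded continuous maps this is a
contraction with constant `Λ`, so the Banach fixed point theorem gives a unique bounded
conjugacy. Applying this to the pairs `(g, h)`, `(h, g)`, `(h, h)` and `(g, g)`: composing
`id + v` and `id + w` in either order gives a bounded conjugacy of `A + h` (resp. `A + g`) with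
itself, which by uniqueness is the identity.
-/

open NNReal BoundedContinuousFunction Function

def IsBoundedConjugacy {E : Type*} [NormedAddCommGroup E] (F G v : E → E) : Prop :=
  Continuous v ∧ (∃ M : ℝ, ∀ x, ‖v x‖ ≤ M) ∧ ∀ x, F x + v (F x) = G (x + v x)

namespace IsBoundedConjugacy

variable {E : Type*} [NormedAddCommGroup E] {F G H v w : E → E}

theorem zero (F : E → E) : IsBoundedConjugacy F F 0 :=
  ⟨continuous_const, ⟨0, by simp⟩, by simp⟩

theorem trans (hv : IsBoundedConjugacy F G v) (hw : IsBoundedConjugacy G H w) :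
    IsBoundedConjugacy F H (fun x => v x + w (x + v x)) := by
  obtain ⟨hvC, ⟨Mv, hMv⟩, hvF⟩ := hv
  obtain ⟨hwC, ⟨Mw, hMw⟩, hwG⟩ := hw
  refine ⟨by fun_prop, ⟨Mv + Mw, fun x => (norm_add_le _ _).trans (add_le_add (hMv x) (hMw _))⟩,
    fun x => ?_⟩
  rw [← add_assoc, hvF, hwG, add_assoc]

end IsBoundedConjugacy

theorem ContinuousLinearEquiv.exists_homeomorph_eq_add_of_lipschitzWith {K E : Type*}
    [NontriviallyNormedField K] [NormedAddCommGroup E] [NormedSpace K E] [CompleteSpace E]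
    (A : E ≃L[K] E) {h : E → E} {L : ℝ≥0} (hh : LipschitzWith L h) (hL : (L : ℝ) < ‖(A.symm : E →L[K] E)‖⁻¹) :
    ∃ F : E ≃ₜ E, ⇑F = fun x => A x + h x := by
  have hA : ApproximatesLinearOn (fun x => A x + h x) (A : E →L[K] E) Set.univ L := by
    refine LipschitzOnWith.approximatesLinearOn ?_
    convert hh.lipschitzOnWith (s := Set.univ) using 1
    ext x; simp
  refine ⟨hA.toHomeomorph _ (Or.inr ?_), rfl⟩
  rwa [← NNReal.coe_lt_coe, NNReal.coe_inv, coe_nnnorm]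

theorem LipschitzWith.dist_comp_add_le {E G : Type*} [SeminormedAddCommGroup E]
    [PseudoMetricSpace G] {L : ℝ≥0} {φ : E → G} (hφ : LipschitzWith L φ) (v₁ v₂ : E →ᵇ E) (x : E) :
    dist (φ (x + v₁ x)) (φ (x + v₂ x)) ≤ L * dist v₁ v₂ :=
  (hφ.dist_le_mul _ _).trans <| by
    rw [dist_add_left]; exact mul_le_mul_of_nonneg_left (dist_coe_le_dist x) L.coe_nonneg

section Operator

variable {K Es Eu : Type*} [NontriviallyNormedField K]
  [NormedAddCommGroup Es] [NormedSpace K Es] [NormedAddCommGroup Eu] [NormedSpace K Eu]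
  (A₁ : Es ≃L[K] Es) (A₂ : Eu ≃L[K] Eu) (F : (Es × Eu) ≃ₜ (Es × Eu))
  (g h : (Es × Eu) →ᵇ (Es × Eu))

def conjugacyDefect (v : (Es × Eu) →ᵇ (Es × Eu)) : (Es × Eu) →ᵇ (Es × Eu) :=
  g.compContinuous ⟨fun x => x + v x, by fun_prop⟩ - h

noncomputable def conjugacyOperator (v : (Es × Eu) →ᵇ (Es × Eu)) : (Es × Eu) →ᵇ (Es × Eu) :=
  ((ContinuousLinearMap.id K Es).prodMap 0).compLeftContinuousBounded _
      (((A₁.prodCongr A₂ : (Es × Eu) →L[K] (Es × Eu)).compLeftContinuousBounded _ v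
        + conjugacyDefect g h v).compContinuous F.symm)
    + ((0 : Es →L[K] Es).prodMap (A₂.symm : Eu →L[K] Eu)).compLeftContinuousBounded _
      (v.compContinuous F - conjugacyDefect g h v)

variable {A₁ A₂ F g h}

theorem conjugacyDefect_apply (v : (Es × Eu) →ᵇ (Es × Eu)) (x : Es × Eu) :
    conjugacyDefect g h v x = g (x + v x) - h x := rfl

theorem conjugacyOperator_apply (v : (Es × Eu) →ᵇ (Es × Eu)) (y : Es × Eu) :
    conjugacyOperator A₁ A₂ F g h v y =
      (A₁ (v (F.symm y)).1 + (conjugacyDefect g h v (F.symm y)).1,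
        A₂.symm ((v (F y)).2 - (conjugacyDefect g h v y).2)) := by
  ext <;> simp [conjugacyOperator]

theorem isFixedPt_conjugacyOperator_iff {v : (Es × Eu) →ᵇ (Es × Eu)} :
    IsFixedPt (conjugacyOperator A₁ A₂ F g h) v ↔
      ∀ x, v (F x) = A₁.prodCongr A₂ (v x) + conjugacyDefect g h v x := by
  constructor
  · intro hv x
    have hs := congrArg Prod.fst (DFunLike.congr_fun hv (F x))
    have hu := congrArg Prod.snd (DFunLike.congr_fun hv x)
    simp only [conjugacyOperator_apply, F.symm_apply_apply, A₂.symm_apply_eq] at hs hu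
    ext
    · exact hs.symm
    · exact sub_eq_iff_eq_add.mp hu
  · intro H
    ext y
    · simp only [conjugacyOperator_apply]
      rw [← F.apply_symm_apply y, H, F.symm_apply_apply]
      rfl
    · simp only [conjugacyOperator_apply, A₂.symm_apply_eq, H]
      exact add_sub_cancel_right _ _

theorem lipschitzWith_conjugacyOperator {Lgs Lgu : ℝ≥0}
    (hgs : LipschitzWith Lgs (fun x => (g x).1)) (hgu : LipschitzWith Lgu (fun x => (g x).2)) :
    LipschitzWith (max (‖(A₂.symm : Eu →L[K] Eu)‖₊ * (1 + Lgu)) (‖(A₁ : Es →L[K] Es)‖₊ + Lgs))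
      (conjugacyOperator A₁ A₂ F g h) := by
  refine LipschitzWith.of_dist_le_mul fun v₁ v₂ => (dist_le (by positivity)).mpr fun y => ?_
  set d := dist v₁ v₂
  have hv : ∀ z, ‖v₁ z - v₂ z‖ ≤ d := fun z => by rw [← dist_eq_norm]; exact dist_coe_le_dist z
  have hs : ‖A₁ (v₁ (F.symm y)).1 + (conjugacyDefect g h v₁ (F.symm y)).1
      - (A₁ (v₂ (F.symm y)).1 + (conjugacyDefect g h v₂ (F.symm y)).1)‖
        ≤ (‖(A₁ : Es →L[K] Es)‖ + Lgs) * d := by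
    set z := F.symm y
    calc _ = ‖A₁ (v₁ z - v₂ z).1 + ((g (z + v₁ z)).1 - (g (z + v₂ z)).1)‖ := by
          congr 1; simp only [Prod.fst_sub, map_sub, conjugacyDefect_apply]; abel
      _ ≤ ‖(A₁ : Es →L[K] Es)‖ * ‖(v₁ z - v₂ z).1‖ + dist (g (z + v₁ z)).1 (g (z + v₂ z)).1 :=
          norm_add_le_of_le ((A₁ : Es →L[K] Es).le_opNorm _) (dist_eq_norm _ _).ge
      _ ≤ ‖(A₁ : Es →L[K] Es)‖ * d + Lgs * d :=
          add_le_add (mul_le_mul_of_nonneg_left ((norm_fst_le _).trans (hv z)) (norm_nonneg _))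
            (hgs.dist_comp_add_le v₁ v₂ z)
      _ = _ := by ring
  have hu : ‖A₂.symm ((v₁ (F y)).2 - (conjugacyDefect g h v₁ y).2)
      - A₂.symm ((v₂ (F y)).2 - (conjugacyDefect g h v₂ y).2)‖
        ≤ ‖(A₂.symm : Eu →L[K] Eu)‖ * (1 + Lgu) * d := by
    rw [← map_sub]
    refine ((A₂.symm : Eu →L[K] Eu).le_opNorm _).trans ?_
    rw [mul_assoc]
    refine mul_le_mul_of_nonneg_left ?_ (norm_nonneg _)
    calc _ = ‖(v₁ (F y) - v₂ (F y)).2 - ((g (y + v₁ y)).2 - (g (y + v₂ y)).2)‖ := by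
          congr 1; simp only [Prod.snd_sub, conjugacyDefect_apply]; abel
      _ ≤ ‖(v₁ (F y) - v₂ (F y)).2‖ + dist (g (y + v₁ y)).2 (g (y + v₂ y)).2 :=
          norm_sub_le_of_le le_rfl (dist_eq_norm _ _).ge
      _ ≤ d + Lgu * d := add_le_add ((norm_snd_le _).trans (hv _)) (hgu.dist_comp_add_le v₁ v₂ y)
      _ = _ := by ring
  rw [conjugacyOperator_apply, conjugacyOperator_apply, Prod.dist_eq, dist_eq_norm, dist_eq_norm]
  push_cast
  rw [max_mul_of_nonneg _ _ dist_nonneg, max_comm (_ * d)]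
  exact max_le_max hs hu

theorem isBoundedConjugacy_iff_isFixedPt (hF : ∀ x, F x = A₁.prodCongr A₂ x + h x)
    (v : (Es × Eu) →ᵇ (Es × Eu)) :
    IsBoundedConjugacy F (fun x => A₁.prodCongr A₂ x + g x) v ↔
      IsFixedPt (conjugacyOperator A₁ A₂ F g h) v := by
  rw [isFixedPt_conjugacyOperator_iff]
  refine ⟨fun hv x => ?_, fun H => ⟨v.continuous, ⟨‖v‖, v.norm_coe_le_norm⟩, fun x => ?_⟩⟩
  · calc v (F x) = F x + v (F x) - F x := by abel
      _ = A₁.prodCongr A₂ (x + v x) + g (x + v x) - (A₁.prodCongr A₂ x + h x) := by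
          rw [hv.2.2 x, hF x]
      _ = _ := by rw [map_add, conjugacyDefect_apply]; abel
  · show F x + v (F x) = A₁.prodCongr A₂ (x + v x) + g (x + v x)
    rw [H, hF x, map_add, conjugacyDefect_apply]
    abel

end Operator

theorem existsUnique_isBoundedConjugacy {K Es Eu : Type*} [NontriviallyNormedField K]
    [NormedAddCommGroup Es] [NormedSpace K Es] [CompleteSpace Es]
    [NormedAddCommGroup Eu] [NormedSpace K Eu] [CompleteSpace Eu]
    (A₁ : Es ≃L[K] Es) (A₂ : Eu ≃L[K] Eu) {g h : Es × Eu → Es × Eu} {Lh Lgs Lgu : ℝ≥0}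
    (hhL : LipschitzWith Lh h)
    (hgsL : LipschitzWith Lgs (fun x => (g x).1)) (hguL : LipschitzWith Lgu (fun x => (g x).2))
    (hgB : ∃ M : ℝ, ∀ x, ‖g x‖ ≤ M) (hhB : ∃ M : ℝ, ∀ x, ‖h x‖ ≤ M)
    (hLh : (Lh : ℝ) < ‖((A₁.prodCongr A₂).symm : (Es × Eu) →L[K] (Es × Eu))‖⁻¹)
    (hΛ : max (‖(A₂.symm : Eu →L[K] Eu)‖ * (1 + (Lgu : ℝ)))
        (‖(A₁ : Es →L[K] Es)‖ + (Lgs : ℝ)) < 1) :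
    ∃! v, IsBoundedConjugacy (fun x => A₁.prodCongr A₂ x + h x)
      (fun x => A₁.prodCongr A₂ x + g x) v := by
  obtain ⟨Mg, hMg⟩ := hgB
  obtain ⟨Mh, hMh⟩ := hhB
  obtain ⟨F, hF⟩ := (A₁.prodCongr A₂).exists_homeomorph_eq_add_of_lipschitzWith hhL hLh
  let gb := ofNormedAddCommGroup g (hgsL.continuous.prodMk hguL.continuous) Mg hMg
  let hb := ofNormedAddCommGroup h hhL.continuous Mh hMh
  have hT : ContractingWith _ (conjugacyOperator A₁ A₂ F gb hb) :=
    ⟨by rw [← NNReal.coe_lt_coe]; push_cast; exact hΛ, lipschitzWith_conjugacyOperator hgsL hguL⟩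
  have hiff := isBoundedConjugacy_iff_isFixedPt (g := gb) (h := hb) (fun x => congrFun hF x)
  rw [← hF]
  refine ⟨_, (hiff _).mpr hT.fixedPoint_isFixedPt, fun v hv => ?_⟩
  obtain ⟨M, hM⟩ := hv.2.1
  exact congrArg DFunLike.coe <|
    hT.fixedPoint_unique ((hiff (ofNormedAddCommGroup v hv.1 M hM)).mp hv)

/-- If both `(g,h)` and `(h,g)` satisfy the conditions of the conjugacy lemma,
then the conjugacy `id + v` from `A + h` to `A + g` is a homeomorphism, and
`w := (id + v)⁻¹ - id` is the unique bounded continuous map with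
`(id + w) ∘ (A + g) = (A + h) ∘ (id + w)`. -/
theorem conjugacy_is_homeomorphism
    {K Es Eu : Type*} [NontriviallyNormedField K]
    [NormedAddCommGroup Es] [NormedSpace K Es] [CompleteSpace Es]
    [NormedAddCommGroup Eu] [NormedSpace K Eu] [CompleteSpace Eu]
    (A₁ : Es ≃L[K] Es) (A₂ : Eu ≃L[K] Eu)
    (g h : Es × Eu → Es × Eu)
    (Lg Lh Lgs Lgu Lhs Lhu : ℝ≥0)
    (hgL : LipschitzWith Lg g) (hhL : LipschitzWith Lh h)
    (hgsL : LipschitzWith Lgs (fun x => (g x).1))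
    (hguL : LipschitzWith Lgu (fun x => (g x).2))
    (hhsL : LipschitzWith Lhs (fun x => (h x).1))
    (hhuL : LipschitzWith Lhu (fun x => (h x).2))
    (hgB : ∃ M : ℝ, ∀ x, ‖g x‖ ≤ M) (hhB : ∃ M : ℝ, ∀ x, ‖h x‖ ≤ M)
    (hLh : (Lh : ℝ) < ‖((A₁.prodCongr A₂).symm : (Es × Eu) →L[K] (Es × Eu))‖⁻¹)
    (hΛ : max (‖(A₂.symm : Eu →L[K] Eu)‖ * (1 + (Lgu : ℝ)))
        (‖(A₁ : Es →L[K] Es)‖ + (Lgs : ℝ)) < 1)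
    (hLg : (Lg : ℝ) < ‖((A₁.prodCongr A₂).symm : (Es × Eu) →L[K] (Es × Eu))‖⁻¹)
    (hΛ' : ‖(A₂.symm : Eu →L[K] Eu)‖ * (1 + (Lhu : ℝ)) < 1)
    (hΛ'' : ‖(A₁ : Es →L[K] Es)‖ + (Lhs : ℝ) < 1)
    (v : Es × Eu → Es × Eu)
    (hvC : Continuous v) (hvB : ∃ M : ℝ, ∀ x, ‖v x‖ ≤ M)
    (hvEq : ∀ x, (A₁.prodCongr A₂) x + h x + v ((A₁.prodCongr A₂) x + h x)
      = (A₁.prodCongr A₂) (x + v x) + g (x + v x)) :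
    ∃ w : Es × Eu → Es × Eu,
      Continuous w ∧ (∃ M : ℝ, ∀ x, ‖w x‖ ≤ M) ∧
      (∀ x, (x + v x) + w (x + v x) = x) ∧
      (∀ x, (x + w x) + v (x + w x) = x) ∧
      (∀ x, (A₁.prodCongr A₂) x + g x + w ((A₁.prodCongr A₂) x + g x)
        = (A₁.prodCongr A₂) (x + w x) + h (x + w x)) ∧
      (∀ w' : Es × Eu → Es × Eu,
        (Continuous w' ∧ (∃ M : ℝ, ∀ x, ‖w' x‖ ≤ M) ∧
          ∀ x, (A₁.prodCongr A₂) x + g x + w' ((A₁.prodCongr A₂) x + g x)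
            = (A₁.prodCongr A₂) (x + w' x) + h (x + w' x)) → w' = w) := by
  have hv : IsBoundedConjugacy (fun x => A₁.prodCongr A₂ x + h x)
      (fun x => A₁.prodCongr A₂ x + g x) v := ⟨hvC, hvB, hvEq⟩
  obtain ⟨w, hw, hw_unique⟩ := existsUnique_isBoundedConjugacy A₁ A₂ hgL hhsL hhuL hhB hgB hLg
    (max_lt hΛ' hΛ'')
  have hvw : (fun x => v x + w (x + v x)) = 0 :=
    (existsUnique_isBoundedConjugacy A₁ A₂ hhL hhsL hhuL hhB hhB hLh (max_lt hΛ' hΛ'')).unique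
      (hv.trans hw) (.zero _)
  have hwv : (fun x => w x + v (x + w x)) = 0 :=
    (existsUnique_isBoundedConjugacy A₁ A₂ hgL hgsL hguL hgB hgB hLg hΛ).unique
      (hw.trans hv) (.zero _)
  refine ⟨w, hw.1, hw.2.1, fun x => ?_, fun x => ?_, hw.2.2, hw_unique⟩
  · rw [add_assoc, congrFun hvw x, Pi.zero_apply, add_zero]
  · rw [add_assoc, congrFun hwv x, Pi.zero_apply, add_zero]
end
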